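/- Let m ≥ 4 and let z ∈ 𝔽_{q^m} be such that 1, z, z², z³ are linearly independent over 𝔽_q. Then the matrix G = [[1, z, 0, 0], [0, 0, 1, z²]] ∈ 𝔽_{q^m}^{2×4} represents the direct sum U_{1,2}(q) ⊕ U_{1,2}(q); that is, ρ_G equals the rank function of U_{1,2}(q) ⊕ U_{1,2}(q) on all 𝔽_q-subspaces of 𝔽_q^4. -/

import Mathlib

open Module Matrix

/-- The row space (over `Fq`) of a matrix with rows indexed by `Fin y`. -/
def rowSpace {Fq : Type*} [Field Fq] {y : ℕ} {ι : Type*} (Y : Matrix (Fin y) ι Fq) :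
    Submodule Fq (ι → Fq) :=
  Submodule.span Fq (Set.range fun i => Y i)

/-- The rank function (as an integer) of the direct sum `M₁ ⊕ M₂` of q-matroids
`M₁ = (𝔽_q^{n₁}, ρ₁)` and `M₂ = (𝔽_q^{n₂}, ρ₂)` on `𝔽_q^{n₁+n₂} = (Fin n₁ ⊕ Fin n₂) → 𝔽_q`. -/
noncomputable def dsRank {Fq : Type*} [Field Fq] {n₁ n₂ : ℕ}
    (ρ₁ : Submodule Fq (Fin n₁ → Fq) → ℕ) (ρ₂ : Submodule Fq (Fin n₂ → Fq) → ℕ)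
    (V : Submodule Fq ((Fin n₁ ⊕ Fin n₂) → Fq)) : ℤ :=
  (finrank Fq V : ℤ) +
    sInf {z : ℤ | ∃ X : Submodule Fq ((Fin n₁ ⊕ Fin n₂) → Fq), X ≤ V ∧
      z = (ρ₁ (X.map (LinearMap.funLeft Fq Fq Sum.inl)) : ℤ) +
            (ρ₂ (X.map (LinearMap.funLeft Fq Fq Sum.inr)) : ℤ) - (finrank Fq X : ℤ)}

section Auxiliary

open Submodule LinearMap

variable {Fq K : Type*} [Field Fq] [Field K] [Algebra Fq K]

/-- Extract coefficients from a linear relation among `1, z, z², z³`. -/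
lemma key4 {z : K} (hz : LinearIndependent Fq ![(1 : K), z, z ^ 2, z ^ 3]) (c : Fin 4 → Fq)
    (h : algebraMap Fq K (c 0) + algebraMap Fq K (c 1) * z + algebraMap Fq K (c 2) * z ^ 2
        + algebraMap Fq K (c 3) * z ^ 3 = 0) : ∀ i, c i = 0 := by
  refine Fintype.linearIndependent_iff.mp hz c ?_
  rw [Fin.sum_univ_four]
  simp only [Matrix.cons_val_zero, Matrix.cons_val_one, Matrix.head_cons, Algebra.smul_def,
    Matrix.cons_val_two, Matrix.tail_cons, Matrix.cons_val_three]
  linear_combination h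

/-- Rank–nullity for the restriction of a linear map to a submodule. -/
lemma my_rank_nullity {M N : Type*} [AddCommGroup M] [Module Fq M] [AddCommGroup N] [Module Fq N]
    [FiniteDimensional Fq M] (X : Submodule Fq M) (f : M →ₗ[Fq] N) :
    finrank Fq (X.map f) + finrank Fq ↥(X ⊓ LinearMap.ker f) = finrank Fq X := by
  have h := LinearMap.finrank_range_add_finrank_ker (f.domRestrict X)
  rw [LinearMap.range_domRestrict, LinearMap.ker_domRestrict] at h
  rw [← h]
  congr 1
  rw [← Submodule.finrank_map_subtype_eq X ((LinearMap.ker f).comap X.subtype),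
    Submodule.map_comap_subtype, inf_comm]


variable {Fq K : Type*} [Field Fq] [Field K] [Algebra Fq K]

/-- The `Fq`-linear map `v ↦ (v₁ + v₂ z, v₃ + v₄ z²)`. -/
noncomputable def psi (z : K) : ((Fin 2 ⊕ Fin 2) → Fq) →ₗ[Fq] ((Fin 1 ⊕ Fin 1) → K) where
  toFun v := Sum.elim
    (fun _ => algebraMap Fq K (v (Sum.inl 0)) + algebraMap Fq K (v (Sum.inl 1)) * z)
    (fun _ => algebraMap Fq K (v (Sum.inr 0)) + algebraMap Fq K (v (Sum.inr 1)) * z ^ 2)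
  map_add' u v := by funext i; cases i <;> simp [map_add] <;> ring
  map_smul' c v := by
    funext i
    cases i <;> simp [Algebra.smul_def, _root_.map_mul] <;> ring

lemma psi_inl (z : K) (v : (Fin 2 ⊕ Fin 2) → Fq) (i : Fin 1) :
    psi z v (Sum.inl i) =
      algebraMap Fq K (v (Sum.inl 0)) + algebraMap Fq K (v (Sum.inl 1)) * z := rfl

lemma psi_inr (z : K) (v : (Fin 2 ⊕ Fin 2) → Fq) (i : Fin 1) :
    psi z v (Sum.inr i) =
      algebraMap Fq K (v (Sum.inr 0)) + algebraMap Fq K (v (Sum.inr 1)) * z ^ 2 := rfl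

lemma psi_eq_zero {z : K} (hz : LinearIndependent Fq ![(1 : K), z, z ^ 2, z ^ 3])
    {v : (Fin 2 ⊕ Fin 2) → Fq} (h : psi z v = 0) : v = 0 := by
  have h1 : algebraMap Fq K (v (Sum.inl 0)) + algebraMap Fq K (v (Sum.inl 1)) * z = 0 :=
    congrFun h (Sum.inl 0)
  have h2 : algebraMap Fq K (v (Sum.inr 0)) + algebraMap Fq K (v (Sum.inr 1)) * z ^ 2 = 0 :=
    congrFun h (Sum.inr 0)
  have k1 := key4 hz ![v (Sum.inl 0), v (Sum.inl 1), 0, 0] (by simpa using h1)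
  have k2 := key4 hz ![v (Sum.inr 0), 0, v (Sum.inr 1), 0] (by simpa using h2)
  funext i
  rcases i with i | i <;> fin_cases i
  · simpa using k1 0
  · simpa using k1 1
  · simpa using k2 0
  · simpa using k2 2

/-- The mixed minors vanish when the "determinant" of `ψ u, ψ w` vanishes. -/
lemma minors {z : K} (hz : LinearIndependent Fq ![(1 : K), z, z ^ 2, z ^ 3])
    (u w : (Fin 2 ⊕ Fin 2) → Fq)
    (h : psi z u (Sum.inl 0) * psi z w (Sum.inr 0) = psi z w (Sum.inl 0) * psi z u (Sum.inr 0)) :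
    ∀ i j : Fin 2, u (Sum.inl i) * w (Sum.inr j) = w (Sum.inl i) * u (Sum.inr j) := by
  rw [psi_inl, psi_inr, psi_inl, psi_inr] at h
  have k := key4 hz
    ![u (Sum.inl 0) * w (Sum.inr 0) - w (Sum.inl 0) * u (Sum.inr 0),
      u (Sum.inl 1) * w (Sum.inr 0) - w (Sum.inl 1) * u (Sum.inr 0),
      u (Sum.inl 0) * w (Sum.inr 1) - w (Sum.inl 0) * u (Sum.inr 1),
      u (Sum.inl 1) * w (Sum.inr 1) - w (Sum.inl 1) * u (Sum.inr 1)]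
    (by
      simp only [Matrix.cons_val_zero, Matrix.cons_val_one, Matrix.head_cons,
        Matrix.cons_val_two, Matrix.tail_cons, Matrix.cons_val_three, map_sub, _root_.map_mul]
      linear_combination h)
  intro i j
  fin_cases i <;> fin_cases j
  · exact sub_eq_zero.mp (by simpa using k 0)
  · exact sub_eq_zero.mp (by simpa using k 2)
  · exact sub_eq_zero.mp (by simpa using k 1)
  · exact sub_eq_zero.mp (by simpa using k 3)

/-- If a submodule of `K²` contains two vectors with nonzero determinant, its rank is ≥ 2. -/
lemma two_le_finrank {W : Submodule K ((Fin 1 ⊕ Fin 1) → K)} {x y : (Fin 1 ⊕ Fin 1) → K}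
    (hx : x ∈ W) (hy : y ∈ W)
    (hdet : x (Sum.inl 0) * y (Sum.inr 0) ≠ y (Sum.inl 0) * x (Sum.inr 0)) :
    2 ≤ finrank K W := by
  have hli : LinearIndependent K ![x, y] := by
    rw [LinearIndependent.pair_iff]
    intro s t hst
    have h1 : s * x (Sum.inl 0) + t * y (Sum.inl 0) = 0 := by
      have := congrFun hst (Sum.inl 0); simpa using this
    have h2 : s * x (Sum.inr 0) + t * y (Sum.inr 0) = 0 := by
      have := congrFun hst (Sum.inr 0); simpa using this
    have hs : s * (x (Sum.inl 0) * y (Sum.inr 0) - y (Sum.inl 0) * x (Sum.inr 0)) = 0 := by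
      linear_combination y (Sum.inr 0) * h1 - y (Sum.inl 0) * h2
    have ht : t * (x (Sum.inl 0) * y (Sum.inr 0) - y (Sum.inl 0) * x (Sum.inr 0)) = 0 := by
      linear_combination x (Sum.inl 0) * h2 - x (Sum.inr 0) * h1
    have hd : x (Sum.inl 0) * y (Sum.inr 0) - y (Sum.inl 0) * x (Sum.inr 0) ≠ 0 :=
      sub_ne_zero.mpr hdet
    exact ⟨by rcases mul_eq_zero.mp hs with h | h; exact h; exact absurd h hd,
      by rcases mul_eq_zero.mp ht with h | h; exact h; exact absurd h hd⟩
  have hspan : Submodule.span K (Set.range ![x, y]) ≤ W := by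
    rw [Submodule.span_le]
    rintro _ ⟨i, rfl⟩
    fin_cases i
    · simpa using hx
    · simpa using hy
  calc 2 = finrank K (Submodule.span K (Set.range ![x, y])) := by
        rw [finrank_span_eq_card hli]; simp
    _ ≤ finrank K W := Submodule.finrank_mono hspan

/-- Scalar extension absorbs the `Fq`-span. -/
lemma span_image_span {M N : Type*} [AddCommGroup M] [Module Fq M] [AddCommGroup N]
    [Module Fq N] [Module K N] [IsScalarTower Fq K N] (f : M →ₗ[Fq] N) (S : Set M) :
    Submodule.span K (f '' (Submodule.span Fq S : Set M)) = Submodule.span K (f '' S) := by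
  apply le_antisymm
  · rw [Submodule.span_le]
    rintro _ ⟨x, hx, rfl⟩
    have h1 : f x ∈ Submodule.map f (Submodule.span Fq S) := Submodule.mem_map_of_mem hx
    rw [Submodule.map_span] at h1
    have h2 : Submodule.span Fq (f '' S) ≤
        (Submodule.span K (f '' S)).restrictScalars Fq :=
      Submodule.span_le.mpr Submodule.subset_span
    exact h2 h1
  · exact Submodule.span_mono (Set.image_mono Submodule.subset_span)
lemma ker_inf_ker :
    LinearMap.ker (LinearMap.funLeft Fq Fq (Sum.inl : Fin 2 → Fin 2 ⊕ Fin 2)) ⊓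
      LinearMap.ker (LinearMap.funLeft Fq Fq (Sum.inr : Fin 2 → Fin 2 ⊕ Fin 2)) = ⊥ := by
  rw [eq_bot_iff]
  intro v hv
  rw [Submodule.mem_inf, LinearMap.mem_ker, LinearMap.mem_ker] at hv
  have : v = 0 := by
    funext k
    rcases k with k | k
    · exact congrFun hv.1 k
    · exact congrFun hv.2 k
  simp [this]

lemma map_eq_bot_of_le_ker {M N : Type*} [AddCommGroup M] [Module Fq M] [AddCommGroup N]
    [Module Fq N] {X : Submodule Fq M} {f : M →ₗ[Fq] N} (h : X ≤ LinearMap.ker f) :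
    X.map f = ⊥ := by
  rw [eq_bot_iff]
  rintro _ ⟨v, hv, rfl⟩
  simpa using h hv

lemma le_ker_of_map_eq_bot {M N : Type*} [AddCommGroup M] [Module Fq M] [AddCommGroup N]
    [Module Fq N] {X : Submodule Fq M} {f : M →ₗ[Fq] N} (h : X.map f = ⊥) :
    X ≤ LinearMap.ker f := by
  intro v hv
  have : f v ∈ X.map f := Submodule.mem_map_of_mem hv
  rw [h] at this
  simpa using this

lemma dsRank_eq (V : Submodule Fq ((Fin 2 ⊕ Fin 2) → Fq)) :
    dsRank (fun W => min 1 (finrank Fq W)) (fun W => min 1 (finrank Fq W)) V =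
    min (2 : ℤ) (min (finrank Fq V : ℤ)
      (min ((finrank Fq (V.map (LinearMap.funLeft Fq Fq Sum.inl)) : ℤ) + 1)
           ((finrank Fq (V.map (LinearMap.funLeft Fq Fq Sum.inr)) : ℤ) + 1))) := by
  set pl := LinearMap.funLeft Fq Fq (Sum.inl : Fin 2 → Fin 2 ⊕ Fin 2) with hpl
  set pr := LinearMap.funLeft Fq Fq (Sum.inr : Fin 2 → Fin 2 ⊕ Fin 2) with hpr
  set d := finrank Fq V with hd
  set a1 := finrank Fq (V.map pl) with ha1
  set a2 := finrank Fq (V.map pr) with ha2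
  set ρ : ℤ := min 2 (min (d : ℤ) (min ((a1 : ℤ) + 1) ((a2 : ℤ) + 1))) with hρ
  have hV1 : a1 + finrank Fq ↥(V ⊓ LinearMap.ker pl) = d := my_rank_nullity V pl
  have hV2 : a2 + finrank Fq ↥(V ⊓ LinearMap.ker pr) = d := my_rank_nullity V pr
  set S := {w : ℤ | ∃ X : Submodule Fq ((Fin 2 ⊕ Fin 2) → Fq), X ≤ V ∧
      w = ((min 1 (finrank Fq (X.map pl)) : ℕ) : ℤ) +
            ((min 1 (finrank Fq (X.map pr)) : ℕ) : ℤ) - (finrank Fq X : ℤ)} with hS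
  have hlb : ∀ w ∈ S, ρ - d ≤ w := by
    rintro w ⟨X, hXV, rfl⟩
    have hx : finrank Fq X ≤ d := Submodule.finrank_mono hXV
    have hX1 := my_rank_nullity X pl
    have hX2 := my_rank_nullity X pr
    have hk1 : finrank Fq ↥(X ⊓ LinearMap.ker pl) ≤ finrank Fq ↥(V ⊓ LinearMap.ker pl) :=
      Submodule.finrank_mono (inf_le_inf_right _ hXV)
    have hk2 : finrank Fq ↥(X ⊓ LinearMap.ker pr) ≤ finrank Fq ↥(V ⊓ LinearMap.ker pr) :=
      Submodule.finrank_mono (inf_le_inf_right _ hXV)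
    by_cases hr1 : finrank Fq (X.map pl) = 0
    · by_cases hr2 : finrank Fq (X.map pr) = 0
      · have hb1 : X ≤ LinearMap.ker pl := le_ker_of_map_eq_bot ((Submodule.finrank_eq_zero (S := X.map pl)).mp hr1)
        have hb2 : X ≤ LinearMap.ker pr := le_ker_of_map_eq_bot ((Submodule.finrank_eq_zero (S := X.map pr)).mp hr2)
        have hXbot : X = ⊥ := le_bot_iff.mp (by rw [← ker_inf_ker (Fq := Fq)]; exact le_inf hb1 hb2)
        have : finrank Fq X = 0 := by rw [hXbot]; exact finrank_bot Fq _
        push_cast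
        omega
      · push_cast
        omega
    · by_cases hr2 : finrank Fq (X.map pr) = 0
      · push_cast
        omega
      · push_cast
        omega
  have hcase : ρ = (d : ℤ) ∨ (ρ = 2 ∧ 1 ≤ a1 ∧ 1 ≤ a2) ∨ (ρ = (a1 : ℤ) + 1 ∧ a1 < d) ∨
      (ρ = (a2 : ℤ) + 1 ∧ a2 < d) := by omega
  have hmem : ρ - d ∈ S := by
    rcases hcase with h | ⟨h, h1, h2⟩ | ⟨h, h1⟩ | ⟨h, h1⟩
    · refine ⟨⊥, bot_le, ?_⟩
      rw [h, Submodule.map_bot, Submodule.map_bot]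
      simp [finrank_bot]
    · refine ⟨V, le_rfl, ?_⟩
      rw [h, ← hd, ← ha1, ← ha2]
      push_cast
      omega
    · refine ⟨V ⊓ LinearMap.ker pl, inf_le_left, ?_⟩
      have hm1 : (V ⊓ LinearMap.ker pl).map pl = ⊥ := map_eq_bot_of_le_ker inf_le_right
      have hm2 := my_rank_nullity (V ⊓ LinearMap.ker pl) pr
      have hm3 : (V ⊓ LinearMap.ker pl) ⊓ LinearMap.ker pr = ⊥ := by
        rw [eq_bot_iff, ← ker_inf_ker]
        exact le_inf (le_trans inf_le_left inf_le_right) inf_le_right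
      rw [hm3] at hm2
      have hm4 : finrank Fq (⊥ : Submodule Fq ((Fin 2 ⊕ Fin 2) → Fq)) = 0 := finrank_bot Fq _
      rw [hm4] at hm2
      rw [hm1, h]
      simp only [finrank_bot]
      push_cast
      omega
    · refine ⟨V ⊓ LinearMap.ker pr, inf_le_left, ?_⟩
      have hm1 : (V ⊓ LinearMap.ker pr).map pr = ⊥ := map_eq_bot_of_le_ker inf_le_right
      have hm2 := my_rank_nullity (V ⊓ LinearMap.ker pr) pl
      have hm3 : (V ⊓ LinearMap.ker pr) ⊓ LinearMap.ker pl = ⊥ := by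
        rw [eq_bot_iff, ← ker_inf_ker]
        exact le_inf inf_le_right (le_trans inf_le_left inf_le_right)
      rw [hm3] at hm2
      have hm4 : finrank Fq (⊥ : Submodule Fq ((Fin 2 ⊕ Fin 2) → Fq)) = 0 := finrank_bot Fq _
      rw [hm4] at hm2
      rw [hm1, h]
      simp only [finrank_bot]
      push_cast
      omega
  have hsinf : sInf S = ρ - d :=
    le_antisymm (csInf_le ⟨ρ - d, hlb⟩ hmem) (le_csInf ⟨ρ - d, hmem⟩ hlb)
  show (d : ℤ) + sInf S = ρ
  rw [hsinf]
  ring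
lemma rank_psi {z : K} (hz : LinearIndependent Fq ![(1 : K), z, z ^ 2, z ^ 3])
    (V : Submodule Fq ((Fin 2 ⊕ Fin 2) → Fq)) :
    finrank K (Submodule.span K (psi z '' (V : Set ((Fin 2 ⊕ Fin 2) → Fq)))) =
      min 2 (min (finrank Fq V)
        (min (finrank Fq (V.map (LinearMap.funLeft Fq Fq Sum.inl)) + 1)
             (finrank Fq (V.map (LinearMap.funLeft Fq Fq Sum.inr)) + 1))) := by
  set pl := LinearMap.funLeft Fq Fq (Sum.inl : Fin 2 → Fin 2 ⊕ Fin 2) with hpl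
  set pr := LinearMap.funLeft Fq Fq (Sum.inr : Fin 2 → Fin 2 ⊕ Fin 2) with hpr
  set W := Submodule.span K (psi z '' (V : Set ((Fin 2 ⊕ Fin 2) → Fq))) with hW
  have hW2 : finrank K W ≤ 2 := by
    have h1 := W.finrank_le
    have h2 : finrank K ((Fin 1 ⊕ Fin 1) → K) = 2 := by
      rw [Module.finrank_pi]; simp
    omega
  by_cases hd0 : finrank Fq V = 0
  · have hVbot : V = ⊥ := (Submodule.finrank_eq_zero (S := V)).mp hd0
    have : W = ⊥ := by
      rw [hW, hVbot]
      simp [Submodule.bot_coe, Set.image_singleton]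
    rw [this, hd0, finrank_bot]
    simp
  have hd1 : 1 ≤ finrank Fq V := Nat.one_le_iff_ne_zero.mpr hd0
  have hWpos : 1 ≤ finrank K W := by
    obtain ⟨v, hvV, hv0⟩ := Submodule.ne_bot_iff V |>.mp
      (fun h => hd0 (by rw [h]; exact finrank_bot Fq _))
    have hmem : psi z v ∈ W := Submodule.subset_span (Set.mem_image_of_mem _ hvV)
    have hne : psi z v ≠ 0 := fun h => hv0 (psi_eq_zero hz h)
    have hWne : W ≠ ⊥ := fun h => hne (by simpa [h] using hmem)
    have := (Submodule.finrank_eq_zero (S := W)).not.mpr hWne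
    omega
  -- helper : if V is inside the kernel of one projection, rank W = 1
  by_cases ha1 : finrank Fq (V.map pl) = 0
  · have hle : V ≤ LinearMap.ker pl := le_ker_of_map_eq_bot ((Submodule.finrank_eq_zero).mp ha1)
    set e : (Fin 1 ⊕ Fin 1) → K := Sum.elim (fun _ => 0) (fun _ => 1) with he
    have hWle : W ≤ K ∙ e := by
      rw [hW, Submodule.span_le]
      rintro _ ⟨v, hv, rfl⟩
      have hv0 : ∀ i : Fin 2, v (Sum.inl i) = 0 := fun i => congrFun (hle hv) i
      rw [SetLike.mem_coe, Submodule.mem_span_singleton]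
      refine ⟨psi z v (Sum.inr 0), ?_⟩
      funext k
      rcases k with i | i
      · simp [he, psi_inl, hv0]
      · simp [he, psi_inr]
    have h1 : finrank K W ≤ 1 := by
      have := Submodule.finrank_mono hWle
      rwa [finrank_span_singleton (by simp [he, funext_iff] : e ≠ 0)] at this
    have : finrank K W = 1 := le_antisymm h1 hWpos
    rw [this, ha1]
    omega
  by_cases ha2 : finrank Fq (V.map pr) = 0
  · have hle : V ≤ LinearMap.ker pr := le_ker_of_map_eq_bot ((Submodule.finrank_eq_zero).mp ha2)
    set e : (Fin 1 ⊕ Fin 1) → K := Sum.elim (fun _ => 1) (fun _ => 0) with he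
    have hWle : W ≤ K ∙ e := by
      rw [hW, Submodule.span_le]
      rintro _ ⟨v, hv, rfl⟩
      have hv0 : ∀ i : Fin 2, v (Sum.inr i) = 0 := fun i => congrFun (hle hv) i
      rw [SetLike.mem_coe, Submodule.mem_span_singleton]
      refine ⟨psi z v (Sum.inl 0), ?_⟩
      funext k
      rcases k with i | i
      · simp [he, psi_inl]
      · simp [he, psi_inr, hv0]
    have h1 : finrank K W ≤ 1 := by
      have := Submodule.finrank_mono hWle
      rwa [finrank_span_singleton (by simp [he, funext_iff] : e ≠ 0)] at this
    have : finrank K W = 1 := le_antisymm h1 hWpos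
    rw [this, ha2]
    omega
  by_cases hdim1 : finrank Fq V = 1
  · obtain ⟨v₀, hv₀V, hv₀⟩ := Submodule.ne_bot_iff V |>.mp
      (fun h => hd0 (by rw [h]; exact finrank_bot Fq _))
    have hsle : (Fq ∙ v₀) ≤ V := (Submodule.span_singleton_le_iff_mem v₀ V).mpr hv₀V
    have hVeq : (Fq ∙ v₀) = V := Submodule.eq_of_le_of_finrank_le hsle
      (by rw [finrank_span_singleton hv₀, hdim1])
    have hWle : W ≤ K ∙ psi z v₀ := by
      rw [hW, Submodule.span_le]
      rintro _ ⟨v, hv, rfl⟩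
      rw [SetLike.mem_coe, Submodule.mem_span_singleton]
      rw [← hVeq] at hv
      obtain ⟨c, rfl⟩ := Submodule.mem_span_singleton.mp hv
      exact ⟨algebraMap Fq K c, by rw [LinearMap.map_smul, algebraMap_smul]⟩
    have h1 : finrank K W ≤ 1 := by
      have := Submodule.finrank_mono hWle
      have hne : psi z v₀ ≠ 0 := fun h => hv₀ (psi_eq_zero hz h)
      rwa [finrank_span_singleton hne] at this
    have : finrank K W = 1 := le_antisymm h1 hWpos
    rw [this, hdim1]
    omega
  -- main case
  have hd2 : 2 ≤ finrank Fq V := by omega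
  have hfr2 : 2 ≤ finrank K W := by
    by_contra hlt
    push_neg at hlt
    have H : ∀ u ∈ V, ∀ w ∈ V,
        psi z u (Sum.inl 0) * psi z w (Sum.inr 0) =
          psi z w (Sum.inl 0) * psi z u (Sum.inr 0) := by
      intro u hu w hw
      by_contra hne
      have := two_le_finrank (Submodule.subset_span (Set.mem_image_of_mem _ hu))
        (Submodule.subset_span (Set.mem_image_of_mem _ hw)) hne
      rw [← hW] at this
      omega
    have Hm : ∀ u ∈ V, ∀ w ∈ V, ∀ i j : Fin 2,
        u (Sum.inl i) * w (Sum.inr j) = w (Sum.inl i) * u (Sum.inr j) :=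
      fun u hu w hw => minors hz u w (H u hu w hw)
    -- a vector with nonzero left part
    obtain ⟨x1, hx1, hx1ne⟩ := (Submodule.ne_bot_iff (V.map pl)).mp
      (fun h => ha1 (by rw [h]; exact finrank_bot Fq _))
    obtain ⟨a, ha, rfl⟩ := hx1
    obtain ⟨i₀, hi₀⟩ : ∃ i, a (Sum.inl i) ≠ 0 := by
      by_contra h; push_neg at h
      exact hx1ne (funext fun i => h i)
    obtain ⟨x2, hx2, hx2ne⟩ := (Submodule.ne_bot_iff (V.map pr)).mp
      (fun h => ha2 (by rw [h]; exact finrank_bot Fq _))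
    obtain ⟨b, hb, rfl⟩ := hx2
    obtain ⟨j₁, hj₁⟩ : ∃ j, b (Sum.inr j) ≠ 0 := by
      by_contra h; push_neg at h
      exact hx2ne (funext fun j => h j)
    have hainr : ∃ j, a (Sum.inr j) ≠ 0 := by
      by_contra h; push_neg at h
      have hmm := Hm a ha b hb i₀ j₁
      rw [h j₁, mul_zero] at hmm
      exact (mul_ne_zero hi₀ hj₁) hmm
    obtain ⟨j₀, hj₀⟩ := hainr
    have hVle : V ≤ Fq ∙ a := by
      intro w hw
      rw [Submodule.mem_span_singleton]
      refine ⟨w (Sum.inl i₀) / a (Sum.inl i₀), ?_⟩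
      have h1 := Hm a ha w hw
      funext k
      rcases k with i | j
      · have e1 := h1 i j₀
        have e2 := h1 i₀ j₀
        have hmul : (w (Sum.inl i₀) * a (Sum.inl i) - w (Sum.inl i) * a (Sum.inl i₀)) *
            a (Sum.inr j₀) = 0 := by linear_combination a (Sum.inl i₀) * e1 - a (Sum.inl i) * e2
        have hz0 : w (Sum.inl i₀) * a (Sum.inl i) - w (Sum.inl i) * a (Sum.inl i₀) = 0 :=
          (mul_eq_zero.mp hmul).resolve_right hj₀
        rw [Pi.smul_apply, smul_eq_mul, div_mul_eq_mul_div, div_eq_iff hi₀]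
        linear_combination hz0
      · have e2 := h1 i₀ j
        rw [Pi.smul_apply, smul_eq_mul, div_mul_eq_mul_div, div_eq_iff hi₀]
        linear_combination -e2
    have ha0 : a ≠ 0 := fun h => hi₀ (by rw [h]; rfl)
    have : finrank Fq V ≤ 1 := by
      have := Submodule.finrank_mono hVle
      rwa [finrank_span_singleton ha0] at this
    omega
  have : finrank K W = 2 := le_antisymm hW2 hfr2
  rw [this]
  have hb1 : 1 ≤ finrank Fq (V.map pl) := Nat.one_le_iff_ne_zero.mpr ha1
  have hb2 : 1 ≤ finrank Fq (V.map pr) := Nat.one_le_iff_ne_zero.mpr ha2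
  omega

lemma cols_eq (z : K) {y : ℕ} (Y : Matrix (Fin y) (Fin 2 ⊕ Fin 2) Fq) :
    Set.range (fromBlocks !![(1 : K), z] 0 0 !![(1 : K), z ^ 2] *
        (Y.map (algebraMap Fq K))ᵀ)ᵀ = psi z '' Set.range (fun i => Y i) := by
  have h : (fromBlocks !![(1 : K), z] 0 0 !![(1 : K), z ^ 2] *
      (Y.map (algebraMap Fq K))ᵀ)ᵀ = fun j => psi z (Y j) := by
    funext j i
    rcases i with i | i <;>
    simp [Matrix.transpose_apply, Matrix.mul_apply, Fintype.sum_sum_type,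
      Matrix.fromBlocks_apply₁₁, Matrix.fromBlocks_apply₁₂, Matrix.fromBlocks_apply₂₁,
      Matrix.fromBlocks_apply₂₂, Fin.sum_univ_two, psi, Function.comp] <;>
      ring
  rw [h]
  exact Set.range_comp _ _

end Auxiliary

/-- Let `m ≥ 4` and `z ∈ 𝔽_{q^m}` with `1, z, z², z³` linearly
independent over `𝔽_q`. Then `G = [[1, z, 0, 0], [0, 0, 1, z²]]` represents the direct
sum `U_{1,2}(q) ⊕ U_{1,2}(q)`: `ρ_G` equals the rank function of the direct sum on all
`𝔽_q`-subspaces of `𝔽_q⁴`. -/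
theorem stmt17 (Fq K : Type*) [Field Fq] [Fintype Fq] [Field K] [Fintype K] [Algebra Fq K]
    (m : ℕ) (hm : 4 ≤ m) (hdeg : Module.finrank Fq K = m)
    (z : K) (hz : LinearIndependent Fq ![(1 : K), z, z ^ 2, z ^ 3]) :
    ∀ (y : ℕ) (Y : Matrix (Fin y) (Fin 2 ⊕ Fin 2) Fq),
      ((fromBlocks !![(1 : K), z] 0 0 !![(1 : K), z ^ 2] *
          (Y.map (algebraMap Fq K))ᵀ).rank : ℤ) =
        dsRank (fun V => min 1 (finrank Fq V)) (fun V => min 1 (finrank Fq V))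
          (rowSpace Y) := by
  intro y Y
  rw [Matrix.rank_eq_finrank_span_cols, Matrix.col, cols_eq z Y,
    ← span_image_span (psi z) (Set.range fun i => Y i), dsRank_eq]
  have hrs : Submodule.span Fq (Set.range fun i => Y i) = rowSpace Y := rfl
  rw [hrs, rank_psi hz (rowSpace Y)]
  push_cast
  rfl
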